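/- Let Γ be a countable discrete group with a proper length function ℓ and balls B_k := {γ ∈ Γ : ℓ(γ) ≤ k}, and let ρ : Γ ↷ (X,ν) be a measurable measure-class-preserving action on a σ-finite measure space. If Y ⊆ X is a domain of asymptotic expansion, then Y admits an exhaustion Y_n ↗ Y by domains Y_n of Markov S⁽ⁿ⁾-expansion (for suitable finite symmetric sets S⁽ⁿ⁾ ⊆ Γ containing the identity) such that for each n there is a constant Θ_n ≥ 1 with 1/Θ_n ≤ r(s,y) ≤ Θ_n for every y ∈ Y_n and every s ∈ S⁽ⁿ⁾ with s·y ∈ Y_n. -/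

import Mathlib

/-!
Since the Radon–Nikodym derivatives `r(s, ·)` are almost everywhere positive and finite, `Y` is
exhausted by an increasing sequence of sets `E m` on which `r(s, ·) ∈ [1/T m, T m]` for every `s`
in the ball `B m`. Inside such an `E m` one removes, greedily, nearly largest pieces whose vertex
boundary for `B m` is small compared to their measure. Asymptotic expansion at a small scale `g`
keeps the total removed mass below `g`, and what is left expands uniformly: small pieces by the
maximality of the removal, pieces of measure at least `ν Y / 4` by asymptotic expansion at that
scale. The previously built domain is protected from removal, so iterating with ever finer scales
produces an increasing exhaustion. On each domain the bounds on `r` make `ν̃` and the Markov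
kernel comparable to `ν` and to counting `S`-edges, which turns uniform vertex expansion into a
positive Cheeger constant.
-/

open MeasureTheory ENNReal Filter
open scoped Classical

noncomputable section

/-- The Radon–Nikodym derivative `r(γ,x) = d(γ⁻¹_*ν)/dν (x)` of a
measure-class-preserving action. -/
def rnd {Γ X : Type*} [Group Γ] [MulAction Γ X] [MeasurableSpace X]
    (ν : Measure X) (γ : Γ) (x : X) : ℝ≥0∞ :=
  Measure.rnDeriv (ν.map (fun y => γ⁻¹ • y)) ν x

/-- `σ_{Y,S}(x) = Σ_{s ∈ S, s·x ∈ Y} r(s,x)^{1/2}`. -/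
def sigmaLoc {Γ X : Type*} [Group Γ] [MulAction Γ X] [MeasurableSpace X]
    (ν : Measure X) (S : Finset Γ) (Y : Set X) (x : X) : ℝ≥0∞ :=
  ∑ s ∈ S, if s • x ∈ Y then (rnd ν s x) ^ (1/2 : ℝ) else 0

/-- The measure `ν̃_{Y,S}`, given by `dν̃_{Y,S} = σ_{Y,S} · d(ν|_Y)`. -/
def nuT {Γ X : Type*} [Group Γ] [MulAction Γ X] [MeasurableSpace X]
    (ν : Measure X) (S : Finset Γ) (Y : Set X) : Measure X :=
  (ν.restrict Y).withDensity (sigmaLoc ν S Y)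

/-- The normalised local Markov kernel
`Π_{Y,S}(x,·) = (1/σ_{Y,S}(x)) Σ_{s ∈ S, s·x ∈ Y} r(s,x)^{1/2} δ_{s·x}`. -/
def locKer {Γ X : Type*} [Group Γ] [MulAction Γ X] [MeasurableSpace X]
    (ν : Measure X) (S : Finset Γ) (Y : Set X) (x : X) : Measure X :=
  (sigmaLoc ν S Y x)⁻¹ •
    ∑ s ∈ S, (if s • x ∈ Y then (rnd ν s x) ^ (1/2 : ℝ) else 0) • Measure.dirac (s • x)

/-- The `ν̃_{Y,S}`-size of the boundary of `A ⊆ Y` with respect to `Π_{Y,S}`: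
`|∂ A| = ∫_A Π_{Y,S}(x, Y∖A) dν̃_{Y,S}(x)`. -/
def mkBdry {Γ X : Type*} [Group Γ] [MulAction Γ X] [MeasurableSpace X]
    (ν : Measure X) (S : Finset Γ) (Y A : Set X) : ℝ≥0∞ :=
  ∫⁻ x in A, locKer ν S Y x (Y \ A) ∂(nuT ν S Y)

/-- `Y` is a domain of Markov `S`-expansion: the Cheeger constant of the normalised local
Markov kernel `Π_{Y,S}` with respect to its reversing measure `ν̃_{Y,S}` is strictly
positive. -/
def MarkovSExpansion {Γ X : Type*} [Group Γ] [MulAction Γ X] [MeasurableSpace X]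
    (ν : Measure X) (S : Finset Γ) (Y : Set X) : Prop :=
  0 < sInf { q : ℝ≥0∞ | ∃ A : Set X, MeasurableSet A ∧ A ⊆ Y ∧ 0 < nuT ν S Y A ∧
    nuT ν S Y A ≤ nuT ν S Y Y / 2 ∧ q = mkBdry ν S Y A / nuT ν S Y A }

/-- `Y` is a domain of asymptotic expansion with respect to the proper length function
`ℓ`: there exist `c̲ : (0,1/2] → ℝ_{>0}` and `k̲ : (0,1/2] → ℕ` such that every
measurable `A ⊆ Y` with `α·ν(Y) ≤ ν(A) ≤ ν(Y)/2` satisfies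
`ν((B_{k̲(α)}·A) ∩ Y) > (1+c̲(α))·ν(A)`. -/
def DomainAsymptoticExpansion {Γ X : Type*} [Group Γ] [MulAction Γ X] [MeasurableSpace X]
    (ℓ : Γ → ℕ) (ν : Measure X) (Y : Set X) : Prop :=
  ∃ (c : ℝ → ℝ) (k : ℝ → ℕ), (∀ α ∈ Set.Ioc (0 : ℝ) (1/2), 0 < c α) ∧
    ∀ α ∈ Set.Ioc (0 : ℝ) (1/2), ∀ A : Set X, MeasurableSet A → A ⊆ Y →
      ENNReal.ofReal α * ν Y ≤ ν A → ν A ≤ ν Y / 2 →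
      (1 + ENNReal.ofReal (c α)) * ν A <
        ν ((⋃ γ ∈ {γ : Γ | ℓ γ ≤ k α}, (fun x => γ • x) '' A) ∩ Y)

open scoped Pointwise Topology

namespace DomainExpansion

lemma quarter_add_quarter (x : ℝ≥0∞) : x / 4 + x / 4 = x / 2 := by
  rw [ENNReal.div_add_div_same, ← two_mul, show (4 : ℝ≥0∞) = 2 * 2 by norm_num,
    ENNReal.mul_div_mul_left _ _ two_ne_zero ENNReal.ofNat_ne_top]

lemma rpow_half_le {r Θ : ℝ≥0∞} (hΘ : 1 ≤ Θ) (h : r ≤ Θ) : r ^ (1 / 2 : ℝ) ≤ Θ :=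
  calc r ^ (1 / 2 : ℝ) ≤ Θ ^ (1 / 2 : ℝ) := ENNReal.rpow_le_rpow h (by norm_num)
    _ ≤ Θ ^ (1 : ℝ) := ENNReal.rpow_le_rpow_of_exponent_le hΘ (by norm_num)
    _ = Θ := ENNReal.rpow_one Θ

lemma inv_le_rpow_half {r Θ : ℝ≥0∞} (hΘ : 1 ≤ Θ) (h : Θ⁻¹ ≤ r) : Θ⁻¹ ≤ r ^ (1 / 2 : ℝ) :=
  calc Θ⁻¹ = Θ⁻¹ ^ (1 : ℝ) := (ENNReal.rpow_one _).symm
    _ ≤ Θ⁻¹ ^ (1 / 2 : ℝ) :=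
      ENNReal.rpow_le_rpow_of_exponent_ge (ENNReal.inv_le_one.2 hΘ) (by norm_num)
    _ ≤ r ^ (1 / 2 : ℝ) := ENNReal.rpow_le_rpow h (by norm_num)

lemma eventually_inv_le_and_le {r : ℝ≥0∞} (h0 : 0 < r) (htop : r < ⊤) :
    ∀ᶠ T : ℕ in atTop, (T : ℝ≥0∞)⁻¹ ≤ r ∧ r ≤ T := by
  filter_upwards [ENNReal.tendsto_nat_nhds_top.eventually (lt_mem_nhds htop),
    ENNReal.tendsto_nat_nhds_top.eventually (lt_mem_nhds (ENNReal.inv_lt_top.2 h0))]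
    with T hT hT'
  exact ⟨ENNReal.inv_le_iff_inv_le.2 hT'.le, hT.le⟩

lemma exists_forall_le_two_mul {α : Type*} {p : α → Prop} (f : α → ℝ≥0∞) (hne : ∃ a, p a)
    (hbdd : ⨆ (a) (_ : p a), f a ≠ ⊤) : ∃ a, p a ∧ ∀ b, p b → f b ≤ 2 * f a := by
  set M := ⨆ (a) (_ : p a), f a
  have hle : ∀ b, p b → f b ≤ M := fun b hb => le_iSup₂ (f := fun a (_ : p a) => f a) b hb
  rcases eq_or_ne M 0 with hM | hM
  · obtain ⟨a, ha⟩ := hne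
    exact ⟨a, ha, fun b hb => (hle b hb).trans (hM ▸ zero_le)⟩
  obtain ⟨a, hlt⟩ := lt_iSup_iff.1 (ENNReal.half_lt_self hM hbdd)
  obtain ⟨ha, hlt⟩ := lt_iSup_iff.1 hlt
  refine ⟨a, ha, fun b hb => (hle b hb).trans ?_⟩
  calc M = 2 * (M / 2) := (ENNReal.mul_div_cancel two_ne_zero ENNReal.ofNat_ne_top).symm
    _ ≤ 2 * f a := by gcongr

variable {Γ X : Type*} [Group Γ] [MulAction Γ X]

def vertexBdry (S : Set Γ) (D A : Set X) : Set X := (S • A ∩ D) \ A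

section VertexBoundary

variable (S : Set Γ)

lemma inter_subset_union_vertexBdry (A E Y : Set X) :
    S • A ∩ Y ⊆ A ∪ vertexBdry S E A ∪ Y \ E := by
  rintro z ⟨hz, hzY⟩
  by_cases hzE : z ∈ E
  · by_cases hzA : z ∈ A
    · exact Or.inl (Or.inl hzA)
    · exact Or.inl (Or.inr ⟨⟨hz, hzE⟩, hzA⟩)
  · exact Or.inr ⟨hzY, hzE⟩

lemma vertexBdry_union_subset (E R A : Set X) :
    vertexBdry S E (R ∪ A) ⊆ vertexBdry S E R ∪ vertexBdry S (E \ R) A := by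
  rintro z ⟨⟨hz, hzE⟩, hzRA⟩
  rw [Set.smul_union] at hz
  rcases hz with hz | hz
  · exact Or.inl ⟨⟨hz, hzE⟩, fun h => hzRA (Or.inl h)⟩
  · exact Or.inr ⟨⟨hz, hzE, fun h => hzRA (Or.inl h)⟩, fun h => hzRA (Or.inr h)⟩

lemma vertexBdry_subset_union_sdiff (D D' B : Set X) :
    vertexBdry S D B ⊆ vertexBdry S D' B ∪ D \ D' := by
  rintro z ⟨⟨hz, hzD⟩, hzB⟩
  by_cases hzD' : z ∈ D'
  · exact Or.inl ⟨⟨hz, hzD'⟩, hzB⟩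
  · exact Or.inr ⟨hzD, hzD'⟩

lemma vertexBdry_inter_subset {P D : Set X} (hPD : P ⊆ D) (B : Set X) :
    vertexBdry S P (B ∩ P) ⊆ vertexBdry S D B := by
  rintro z ⟨⟨hz, hzP⟩, hzBP⟩
  exact ⟨⟨Set.smul_subset_smul_left Set.inter_subset_left hz, hPD hzP⟩, fun hzB => hzBP ⟨hzB, hzP⟩⟩

lemma vertexBdry_sdiff_subset (P D B : Set X) :
    vertexBdry S D (B \ P) ⊆ vertexBdry S D B ∪ B ∩ P := by
  rintro z ⟨⟨hz, hzD⟩, hzBP⟩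
  by_cases hzB : z ∈ B
  · exact Or.inr ⟨hzB, not_not.1 fun h => hzBP ⟨hzB, h⟩⟩
  · exact Or.inl ⟨⟨Set.smul_subset_smul_left Set.sdiff_subset hz, hzD⟩, hzB⟩

end VertexBoundary

lemma vertexBdry_mono_set {S T : Set Γ} (h : S ⊆ T) (D B : Set X) :
    vertexBdry S D B ⊆ vertexBdry T D B :=
  Set.sdiff_subset_sdiff_left (Set.inter_subset_inter_left _ (Set.smul_subset_smul_right h))

lemma exists_finset_balls (ℓ : Γ → ℕ) (hl0 : ∀ γ : Γ, ℓ γ = 0 ↔ γ = 1)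
    (hlinv : ∀ γ : Γ, ℓ γ⁻¹ = ℓ γ) (hlprop : ∀ k : ℕ, {γ : Γ | ℓ γ ≤ k}.Finite) :
    ∃ B : ℕ → Finset Γ, Monotone B ∧ (∀ K, (B K : Set Γ) = {γ | ℓ γ ≤ K}) ∧
      ∀ K, 1 ∈ B K ∧ ∀ s ∈ B K, s⁻¹ ∈ B K := by
  refine ⟨fun K => (hlprop K).toFinset, fun K K' h γ hγ => ?_, fun K => (hlprop K).coe_toFinset,
    fun K => ⟨?_, fun s hs => ?_⟩⟩
  · simp only [Set.Finite.mem_toFinset, Set.mem_ofPred_eq] at hγ ⊢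
    exact hγ.trans h
  · simp [(hl0 1).2 rfl]
  · simpa [hlinv] using hs

variable [MeasurableSpace X] {ν : Measure X}

lemma measure_le_half_or_measure_sdiff_le_half (μ : Measure X) {A D : Set X} (hA : MeasurableSet A)
    (hAD : A ⊆ D) : μ A ≤ μ D / 2 ∨ μ (D \ A) ≤ μ D / 2 := by
  by_contra! h
  have hD : μ A + μ (D \ A) = μ D := by
    rw [measure_add_sdiff hA.nullMeasurableSet, Set.union_eq_self_of_subset_left hAD]
  exact (ENNReal.add_lt_add h.1 h.2).ne' (hD.trans (ENNReal.add_halves _).symm)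

lemma le_measure_sdiff_of_le_half (μ : Measure X) {A D : Set X} (hA : MeasurableSet A)
    (hAD : A ⊆ D) (hfin : μ A ≠ ⊤) (h : μ A ≤ μ D / 2) : μ A ≤ μ (D \ A) := by
  have hD : μ D = μ A + μ (D \ A) := by
    rw [measure_add_sdiff hA.nullMeasurableSet, Set.union_eq_self_of_subset_left hAD]
  rw [ENNReal.le_div_iff_mul_le (by simp) (by simp), hD, mul_two] at h
  exact (ENNReal.add_le_add_iff_left hfin).1 h

lemma tendsto_measure_iUnion_sdiff {R : ℕ → Set X} (hR : ∀ i, MeasurableSet (R i))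
    (hmono : Monotone R) (hfin : ν (⋃ i, R i) ≠ ⊤) :
    Tendsto (fun i => ν ((⋃ j, R j) \ R i)) atTop (𝓝 0) := by
  have hempty : ⋂ i, (⋃ j, R j) \ R i = ∅ := by
    ext x
    simp only [Set.mem_iInter, Set.mem_sdiff, Set.mem_iUnion, Set.mem_empty_iff_false, iff_false]
    exact fun h => let ⟨j, hj⟩ := (h 0).1; (h j).2 hj
  simpa [hempty, Function.comp_def] using tendsto_measure_iInter_atTop
    (fun i => ((MeasurableSet.iUnion hR).diff (hR i)).nullMeasurableSet)
    (fun i j hij => Set.sdiff_subset_sdiff_right (hmono hij))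
    ⟨0, ne_top_of_le_ne_top hfin (measure_mono Set.sdiff_subset)⟩

lemma exists_greedy_seq (p : Set X → Set X → Prop) (hp : ∀ R, p R ∅) {a : ℝ≥0∞} (ha : a ≠ ⊤)
    (hpa : ∀ R A, p R A → ν A ≤ a) :
    ∃ R A : ℕ → Set X, R 0 = ∅ ∧ (∀ i, R (i + 1) = R i ∪ A i) ∧ (∀ i, p (R i) (A i)) ∧
      ∀ i B, p (R i) B → ν B ≤ 2 * ν (A i) := by
  have hbdd : ∀ R, ⨆ (A) (_ : p R A), ν A ≠ ⊤ := fun R =>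
    ne_top_of_le_ne_top ha (iSup₂_le (hpa R))
  choose pick hpick hmax using fun R => exists_forall_le_two_mul ν ⟨∅, hp R⟩ (hbdd R)
  let R : ℕ → Set X := fun i => Nat.rec ∅ (fun _ R => R ∪ pick R) i
  exact ⟨R, fun i => pick (R i), rfl, fun i => rfl, fun i => hpick _, fun i => hmax _⟩

lemma exists_exhausting_seq {α : Type*} (J : α → Prop) (D : α → Set X) {Y : Set X}
    (hY0 : ν Y ≠ 0) (hYfin : ν Y ≠ ⊤) {a₀ : α} (h₀ : J a₀)
    (hstep : ∀ a, J a → ∀ ε : ℝ≥0∞, 0 < ε → ∃ b, J b ∧ D a ⊆ D b ∧ ν (Y \ D b) ≤ ε) :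
    ∃ f : ℕ → α, (∀ n, J (f n)) ∧ Monotone (fun n => D (f n)) ∧ (∀ n, 0 < ν (D (f n))) ∧
      ν (Y \ ⋃ n, D (f n)) = 0 := by
  set ε : ℕ → ℝ≥0∞ := fun n => 2⁻¹ ^ (n + 1) * ν Y
  have hε : ∀ n, 0 < ε n := fun n => ENNReal.mul_pos (ENNReal.pow_pos (by simp) _).ne' hY0
  have hεY : ∀ n, ε n < ν Y := fun n => by
    simpa using (ENNReal.mul_lt_mul_iff_left hY0 hYfin).2
      (pow_lt_one₀ zero_le (by norm_num : (2⁻¹ : ℝ≥0∞) < 1) n.succ_ne_zero)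
  have hεlim : Tendsto ε atTop (𝓝 0) := by
    simpa using ENNReal.Tendsto.mul_const ((ENNReal.tendsto_pow_atTop_nhds_zero_of_lt_one
      (by norm_num : (2⁻¹ : ℝ≥0∞) < 1)).comp (tendsto_add_atTop_nat 1)) (Or.inr hYfin)
  choose next hnextJ hnextD hnextY using fun n (a : {a // J a}) => hstep a.1 a.2 (ε n) (hε n)
  let f : ℕ → {a // J a} := fun n => Nat.rec ⟨a₀, h₀⟩ (fun n a => ⟨next n a, hnextJ n a⟩) n
  refine ⟨fun n => (f (n + 1)).1, fun n => (f (n + 1)).2,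
    monotone_nat_of_le_succ fun n => hnextD _ _, fun n => ?_, ?_⟩
  · refine pos_iff_ne_zero.2 fun h0 => (hεY n).not_ge ?_
    rw [← measure_sdiff_null (s := Y) h0]
    exact hnextY n (f n)
  · exact le_antisymm (ge_of_tendsto' hεlim fun n => (measure_mono (Set.sdiff_subset_sdiff_right
      (Set.subset_iUnion (fun n => D (f (n + 1)).1) n))).trans (hnextY n (f n))) zero_le

def IsUniformlyExpanding (ν : Measure X) (S : Set Γ) (D : Set X) (t c : ℝ≥0∞) : Prop :=
  ∀ B ⊆ D, MeasurableSet B → ν B ≤ t → c * ν B ≤ ν (vertexBdry S D B)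

def IsExpandingAbove (ν : Measure X) (S : Set Γ) (Y : Set X) (t c : ℝ≥0∞) : Prop :=
  ∀ A ⊆ Y, MeasurableSet A → t ≤ ν A → ν A ≤ ν Y / 2 → (1 + c) * ν A < ν (S • A ∩ Y)

lemma IsUniformlyExpanding.mono {S T : Set Γ} {D : Set X} {t t' c c' : ℝ≥0∞}
    (h : IsUniformlyExpanding ν S D t c) (hST : S ⊆ T) (ht : t' ≤ t) (hc : c' ≤ c) :
    IsUniformlyExpanding ν T D t' c' := fun B hBD hB hBt =>
  (mul_le_mul_left hc _).trans <|
    (h B hBD hB (hBt.trans ht)).trans (measure_mono (vertexBdry_mono_set hST D B))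

lemma measure_smul_inter_le {S : Set Γ} {Y E R : Set X} {c : ℝ≥0∞}
    (hbd : ν (vertexBdry S E R) ≤ c / 2 * ν R) (hYE : ν (Y \ E) ≤ c / 2 * ν R) :
    ν (S • R ∩ Y) ≤ (1 + c) * ν R :=
  calc ν (S • R ∩ Y) ≤ ν R + ν (vertexBdry S E R) + ν (Y \ E) :=
        (measure_mono (inter_subset_union_vertexBdry S R E Y)).trans
          ((measure_union_le _ _).trans (add_le_add_left (measure_union_le _ _) _))
    _ ≤ ν R + c / 2 * ν R + c / 2 * ν R := by gcongr
    _ = (1 + c) * ν R := by rw [add_assoc, ← add_mul, ENNReal.add_halves, add_mul, one_mul]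

lemma half_mul_le_measure_vertexBdry {S : Set Γ} {Y D B : Set X} {c : ℝ≥0∞}
    (hexp : (1 + c) * ν B < ν (S • B ∩ Y)) (hYD : ν (Y \ D) ≤ c / 2 * ν B) :
    c / 2 * ν B ≤ ν (vertexBdry S D B) := by
  by_contra! h
  exact (measure_smul_inter_le h.le hYD).not_gt hexp

lemma isUniformlyExpanding_of_split {S : Set Γ} {P D : Set X} {a b c : ℝ≥0∞} (hPD : P ⊆ D)
    (hP : MeasurableSet P) (hc1 : c ≤ 1) (hPexp : IsUniformlyExpanding ν S P b c)
    (hsmall : ∀ B ⊆ D \ P, MeasurableSet B → ν B ≤ a → c * ν B ≤ ν (vertexBdry S D B))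
    (hlarge : ∀ B ⊆ D, MeasurableSet B → a < ν B → ν B ≤ b → c * ν B ≤ ν (vertexBdry S D B)) :
    IsUniformlyExpanding ν S D b (c * c / 3) := by
  intro B hBD hB hBb
  have hc3 : c * c / 3 * ν B = c * c * ν B / 3 := by rw [div_eq_mul_inv, div_eq_mul_inv]; ring
  rw [hc3]
  refine ENNReal.div_le_of_le_mul' ?_
  by_cases hq : a < ν (B \ P)
  · calc c * c * ν B ≤ 1 * (c * ν B) := by rw [mul_assoc]; gcongr
      _ ≤ 3 * ν (vertexBdry S D B) := by
        gcongr
        · norm_num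
        · exact hlarge B hBD hB (hq.trans_le (measure_mono Set.sdiff_subset)) hBb
  rw [not_lt] at hq
  have hp : c * ν (B ∩ P) ≤ ν (vertexBdry S D B) :=
    (hPexp _ Set.inter_subset_right (hB.inter hP) ((measure_mono Set.inter_subset_left).trans
      hBb)).trans (measure_mono (vertexBdry_inter_subset S hPD B))
  have hq' : c * ν (B \ P) ≤ ν (vertexBdry S D B) + ν (B ∩ P) :=
    (hsmall _ (Set.sdiff_subset_sdiff_left hBD) (hB.diff hP) hq).trans
      ((measure_mono (vertexBdry_sdiff_subset S P D B)).trans (measure_union_le _ _))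
  calc c * c * ν B ≤ c * c * (ν (B ∩ P) + ν (B \ P)) := by
        gcongr; exact (measure_inter_add_sdiff B hP).ge
    _ = c * (c * ν (B ∩ P)) + c * (c * ν (B \ P)) := by ring
    _ ≤ 1 * ν (vertexBdry S D B) + c * (ν (vertexBdry S D B) + ν (B ∩ P)) := by gcongr
    _ = ν (vertexBdry S D B) + c * ν (vertexBdry S D B) + c * ν (B ∩ P) := by ring
    _ ≤ ν (vertexBdry S D B) + 1 * ν (vertexBdry S D B) + ν (vertexBdry S D B) := by gcongr
    _ = 3 * ν (vertexBdry S D B) := by ring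

lemma measurable_rnd (s : Γ) : Measurable (rnd ν s) := Measure.measurable_rnDeriv _ _

section RadonNikodym

variable [MeasurableConstSMul Γ X] [SigmaFinite ν]
  (hmcp : ∀ γ : Γ, Measure.QuasiMeasurePreserving (fun x : X => γ • x) ν ν)

include hmcp

lemma measure_smul_set_eq_lintegral_rnd (s : Γ) {F : Set X} (hF : MeasurableSet F) :
    ν (s • F) = ∫⁻ x in F, rnd ν s x ∂ν := by
  unfold rnd
  rw [← Set.preimage_smul_inv, ← Measure.map_apply (measurable_const_smul s⁻¹) hF,
    ← withDensity_apply _ hF,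
    Measure.withDensity_rnDeriv_eq _ _ (hmcp s⁻¹).absolutelyContinuous]

lemma measure_smul_set_le (s : Γ) {F : Set X} (hF : MeasurableSet F) {Θ : ℝ≥0∞}
    (h : ∀ x ∈ F, rnd ν s x ≤ Θ) : ν (s • F) ≤ Θ * ν F := by
  rw [measure_smul_set_eq_lintegral_rnd hmcp s hF, ← setLIntegral_const]
  exact setLIntegral_mono measurable_const h

lemma le_measure_smul_set (s : Γ) {F : Set X} (hF : MeasurableSet F) {θ : ℝ≥0∞}
    (h : ∀ x ∈ F, θ ≤ rnd ν s x) : θ * ν F ≤ ν (s • F) := by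
  rw [measure_smul_set_eq_lintegral_rnd hmcp s hF, ← setLIntegral_const]
  exact setLIntegral_mono (measurable_rnd s) h

lemma ae_rnd_pos_lt_top (s : Γ) : ∀ᵐ x ∂ν, 0 < rnd ν s x ∧ rnd ν s x < ⊤ := by
  have hac : ν ≪ ν.map (s⁻¹ • ·) := by
    refine Measure.AbsolutelyContinuous.mk fun F hF hF0 => ?_
    rw [Measure.map_apply (measurable_const_smul s⁻¹) hF, Set.preimage_smul_inv] at hF0
    simpa [Set.preimage_smul] using (hmcp s).preimage_null hF0
  have : SigmaFinite (ν.map (s⁻¹ • ·)) :=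
    (MeasurableEquiv.smul s⁻¹ : X ≃ᵐ X).measurableEmbedding.sigmaFinite_map
  filter_upwards [hac.ae_le (Measure.rnDeriv_pos (hmcp s⁻¹).absolutelyContinuous),
    Measure.rnDeriv_lt_top (ν.map (s⁻¹ • ·)) ν] with x hpos hlt
  exact ⟨hpos, hlt⟩

end RadonNikodym

def edgeMeasure (ν : Measure X) (S : Finset Γ) (A C : Set X) : ℝ≥0∞ :=
  ∑ s ∈ S, ν (A ∩ s⁻¹ • C)

lemma locKer_apply {S : Finset Γ} {D : Set X} (x : X) {C : Set X} (hC : MeasurableSet C) :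
    locKer ν S D x C = (sigmaLoc ν S D x)⁻¹ *
      ∑ s ∈ S, (if s • x ∈ D then rnd ν s x ^ (1 / 2 : ℝ) else 0) * C.indicator 1 (s • x) := by
  simp only [locKer, Measure.smul_apply, Measure.finsetSum_apply, smul_eq_mul,
    Measure.dirac_apply' _ hC]

lemma measurable_sigmaLoc [MeasurableConstSMul Γ X] {S : Finset Γ} {D : Set X}
    (hD : MeasurableSet D) : Measurable (sigmaLoc ν S D) :=
  Finset.measurable_sum _ fun s _ => Measurable.ite (measurable_const_smul s hD)
    ((measurable_rnd s).pow_const _) measurable_const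

section Markov

variable {S : Finset Γ} {D : Set X} {Θ : ℝ≥0∞}
  (hΘ1 : 1 ≤ Θ) (hΘ : ∀ x ∈ D, ∀ s ∈ S, s • x ∈ D → Θ⁻¹ ≤ rnd ν s x ∧ rnd ν s x ≤ Θ)

include hΘ1 hΘ

lemma sigmaLoc_le {x : X} (hx : x ∈ D) : sigmaLoc ν S D x ≤ S.card * Θ := by
  rw [← nsmul_eq_mul]
  refine Finset.sum_le_card_nsmul _ _ _ fun s hs => ?_
  split_ifs with hsx
  · exact rpow_half_le hΘ1 (hΘ x hx s hs hsx).2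
  · exact zero_le

lemma sigmaLoc_ne_zero (hS : 1 ∈ S) (hΘtop : Θ ≠ ⊤) {x : X} (hx : x ∈ D) :
    sigmaLoc ν S D x ≠ 0 := by
  have hx' : (1 : Γ) • x ∈ D := by rwa [one_smul]
  refine (ENNReal.inv_pos.2 hΘtop).trans_le ?_ |>.ne'
  refine le_trans ?_ (Finset.single_le_sum (fun s _ => zero_le) hS)
  rw [if_pos hx']
  exact inv_le_rpow_half hΘ1 (hΘ x hx 1 hS hx').1

lemma nuT_le {A : Set X} (hA : MeasurableSet A) (hAD : A ⊆ D) :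
    nuT ν S D A ≤ S.card * Θ * ν A := by
  rw [nuT, withDensity_apply _ hA, Measure.restrict_restrict hA,
    Set.inter_eq_self_of_subset_left hAD, ← setLIntegral_const]
  exact setLIntegral_mono measurable_const fun x hx => sigmaLoc_le hΘ1 hΘ (hAD hx)

lemma card_le_mul_sigmaLoc_mul_locKer (hS : 1 ∈ S) (hΘtop : Θ ≠ ⊤) {A : Set X}
    (hA : MeasurableSet A) (hAD : A ⊆ D) (hD : MeasurableSet D) {x : X} (hx : x ∈ A) :
    ∑ s ∈ S, (s⁻¹ • (D \ A)).indicator 1 x ≤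
      Θ * (sigmaLoc ν S D x * locKer ν S D x (D \ A)) := by
  have hσ0 := sigmaLoc_ne_zero hΘ1 hΘ hS hΘtop (hAD hx)
  have hσtop : sigmaLoc ν S D x ≠ ⊤ :=
    ne_top_of_le_ne_top (by finiteness) (sigmaLoc_le hΘ1 hΘ (hAD hx))
  rw [locKer_apply x (hD.diff hA), ← mul_assoc (sigmaLoc ν S D x),
    ENNReal.mul_inv_cancel hσ0 hσtop, one_mul, Finset.mul_sum]
  refine Finset.sum_le_sum fun s hs => ?_
  by_cases hsx : s • x ∈ D \ A
  · rw [Set.indicator_of_mem (Set.mem_inv_smul_set_iff.2 hsx), Set.indicator_of_mem hsx,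
      if_pos hsx.1, Pi.one_apply, Pi.one_apply, mul_one,
      ← ENNReal.inv_mul_le_iff (by positivity) hΘtop, mul_one]
    exact inv_le_rpow_half hΘ1 (hΘ x (hAD hx) s hs hsx.1).1
  · rw [Set.indicator_of_notMem (mt Set.mem_inv_smul_set_iff.1 hsx)]
    exact zero_le

variable [MeasurableConstSMul Γ X]

lemma edgeMeasure_le_mul_mkBdry (hS : 1 ∈ S) (hΘtop : Θ ≠ ⊤) {A : Set X}
    (hA : MeasurableSet A) (hAD : A ⊆ D) (hD : MeasurableSet D) :
    edgeMeasure ν S A (D \ A) ≤ Θ * mkBdry ν S D A := by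
  have hDA : ∀ s : Γ, MeasurableSet (s⁻¹ • (D \ A)) := fun s => (hD.diff hA).const_smul _
  have hedge : edgeMeasure ν S A (D \ A) =
      ∫⁻ x in A, ∑ s ∈ S, (s⁻¹ • (D \ A)).indicator 1 x ∂ν := by
    rw [lintegral_finsetSum _ fun s _ => measurable_one.indicator (hDA s)]
    refine Finset.sum_congr rfl fun s _ => ?_
    rw [lintegral_indicator_one (hDA s), Measure.restrict_apply (hDA s), Set.inter_comm]
  have hmk : mkBdry ν S D A =
      ∫⁻ x in A, sigmaLoc ν S D x * locKer ν S D x (D \ A) ∂ν := by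
    rw [mkBdry, nuT, setLIntegral_withDensity_eq_setLIntegral_mul_non_measurable _
      (measurable_sigmaLoc hD) _ hA, Measure.restrict_restrict hA,
      Set.inter_eq_self_of_subset_left hAD]
    · rfl
    · refine ae_restrict_of_forall_mem hA fun x hx => ?_
      exact (sigmaLoc_le hΘ1 hΘ (hAD hx)).trans_lt (by finiteness)
  rw [hedge, hmk, ← lintegral_const_mul' _ _ hΘtop]
  exact setLIntegral_mono' hA fun x hx =>
    card_le_mul_sigmaLoc_mul_locKer hΘ1 hΘ hS hΘtop hA hAD hD hx

variable [SigmaFinite ν] (hmcp : ∀ γ : Γ, Measure.QuasiMeasurePreserving (fun x : X => γ • x) ν ν)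

include hmcp

omit hΘ1 in
lemma measure_vertexBdry_le {A : Set X} (hA : MeasurableSet A) (hAD : A ⊆ D)
    (hD : MeasurableSet D) :
    ν (vertexBdry (S : Set Γ) D A) ≤ Θ * edgeMeasure ν S A (D \ A) := by
  have hsub : vertexBdry (S : Set Γ) D A ⊆ ⋃ s ∈ S, s • (A ∩ s⁻¹ • (D \ A)) := by
    rintro _ ⟨⟨hz, hzD⟩, hzA⟩
    obtain ⟨s, hs, x, hx, rfl⟩ := Set.mem_smul.1 hz
    refine Set.mem_biUnion hs (Set.smul_mem_smul_set ⟨hx, ?_⟩)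
    exact Set.mem_inv_smul_set_iff.2 ⟨hzD, hzA⟩
  refine (measure_mono hsub).trans <| (measure_biUnion_finset_le _ _).trans ?_
  rw [edgeMeasure, Finset.mul_sum]
  refine Finset.sum_le_sum fun s hs => ?_
  refine measure_smul_set_le hmcp s (hA.inter ((hD.diff hA).const_smul _)) fun x hx => ?_
  have hsx := Set.mem_inv_smul_set_iff.1 hx.2
  exact (hΘ x (hAD hx.1) s hs hsx.1).2

lemma edgeMeasure_le_mul_edgeMeasure (hSinv : ∀ s ∈ S, s⁻¹ ∈ S) (hΘtop : Θ ≠ ⊤)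
    {A C : Set X} (hA : MeasurableSet A) (hC : MeasurableSet C) (hAD : A ⊆ D) (hCD : C ⊆ D) :
    edgeMeasure ν S C A ≤ Θ * edgeMeasure ν S A C := by
  have hΘ0 : Θ ≠ 0 := (zero_lt_one.trans_le hΘ1).ne'
  have hflip : edgeMeasure ν S A C = ∑ s ∈ S, ν (A ∩ s • C) :=
    Finset.sum_nbij' (·⁻¹) (·⁻¹) hSinv hSinv (fun s _ => inv_inv s) (fun s _ => inv_inv s)
      fun s _ => rfl
  rw [hflip, edgeMeasure, Finset.mul_sum]
  refine Finset.sum_le_sum fun s hs => ?_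
  have hF : MeasurableSet (C ∩ s⁻¹ • A) := hC.inter (hA.const_smul _)
  have himage : s • (C ∩ s⁻¹ • A) = A ∩ s • C := by
    rw [Set.smul_set_inter, smul_inv_smul, Set.inter_comm]
  rw [← himage, ← ENNReal.inv_mul_le_iff hΘ0 hΘtop]
  refine le_measure_smul_set hmcp s hF fun x hx => ?_
  exact (hΘ x (hCD hx.1) s hs (hAD (Set.mem_inv_smul_set_iff.1 hx.2))).1

lemma mul_nuT_le_mkBdry (hS : 1 ∈ S) (hSinv : ∀ s ∈ S, s⁻¹ ∈ S) (hΘtop : Θ ≠ ⊤)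
    (hD : MeasurableSet D) (hDfin : ν D ≠ ⊤) {c : ℝ≥0∞}
    (hexp : IsUniformlyExpanding ν (S : Set Γ) D (ν D / 2) c) {A : Set X} (hA : MeasurableSet A)
    (hAD : A ⊆ D) (hhalf : nuT ν S D A ≤ nuT ν S D D / 2) :
    c * nuT ν S D A ≤ S.card * Θ ^ 4 * mkBdry ν S D A := by
  have hedge : ∀ B, MeasurableSet B → B ⊆ D → ν B ≤ ν D / 2 →
      c * nuT ν S D B ≤ S.card * Θ ^ 2 * edgeMeasure ν S B (D \ B) := by
    intro B hB hBD hBh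
    calc c * nuT ν S D B ≤ c * (S.card * Θ * ν B) := by gcongr; exact nuT_le hΘ1 hΘ hB hBD
      _ = S.card * Θ * (c * ν B) := by ring
      _ ≤ S.card * Θ * (Θ * edgeMeasure ν S B (D \ B)) := by
        gcongr S.card * Θ * ?_
        exact (hexp B hBD hB hBh).trans (measure_vertexBdry_le hΘ hmcp hB hBD hD)
      _ = S.card * Θ ^ 2 * edgeMeasure ν S B (D \ B) := by ring
  have hmk := edgeMeasure_le_mul_mkBdry hΘ1 hΘ hS hΘtop hA hAD hD
  -- A set of large `ν`-measure is handled through its complement, which carries at least as much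
  -- `ν̃`-mass; the symmetry of `S` lets the edges between them be counted from either side.
  rcases measure_le_half_or_measure_sdiff_le_half ν hA hAD with hAh | hAh
  · calc c * nuT ν S D A ≤ S.card * Θ ^ 2 * edgeMeasure ν S A (D \ A) := hedge A hA hAD hAh
      _ ≤ S.card * Θ ^ 2 * (Θ * mkBdry ν S D A) := by gcongr
      _ = S.card * Θ ^ 3 * mkBdry ν S D A := by ring
      _ ≤ S.card * Θ ^ 4 * mkBdry ν S D A := by
        gcongr S.card * ?_ * _
        exact pow_le_pow_right₀ hΘ1 (by norm_num)
  · have hfin : nuT ν S D A ≠ ⊤ :=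
      ((nuT_le hΘ1 hΘ hA hAD).trans_lt (ENNReal.mul_lt_top (by finiteness)
        ((measure_mono hAD).trans_lt hDfin.lt_top))).ne
    calc c * nuT ν S D A ≤ c * nuT ν S D (D \ A) := by
          gcongr c * ?_
          exact le_measure_sdiff_of_le_half _ hA hAD hfin hhalf
      _ ≤ S.card * Θ ^ 2 * edgeMeasure ν S (D \ A) (D \ (D \ A)) :=
          hedge _ (hD.diff hA) Set.sdiff_subset hAh
      _ = S.card * Θ ^ 2 * edgeMeasure ν S (D \ A) A := by rw [Set.sdiff_sdiff_cancel_left hAD]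
      _ ≤ S.card * Θ ^ 2 * (Θ * edgeMeasure ν S A (D \ A)) := by
          gcongr
          exact edgeMeasure_le_mul_edgeMeasure hΘ1 hΘ hmcp hSinv hΘtop hA (hD.diff hA) hAD
            Set.sdiff_subset
      _ ≤ S.card * Θ ^ 2 * (Θ * (Θ * mkBdry ν S D A)) := by gcongr
      _ = S.card * Θ ^ 4 * mkBdry ν S D A := by ring

theorem markovSExpansion_of_isUniformlyExpanding (hS : 1 ∈ S) (hSinv : ∀ s ∈ S, s⁻¹ ∈ S)
    (hΘtop : Θ ≠ ⊤) (hD : MeasurableSet D) (hDfin : ν D ≠ ⊤) {c : ℝ≥0∞} (hc : 0 < c)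
    (hexp : IsUniformlyExpanding ν (S : Set Γ) D (ν D / 2) c) : MarkovSExpansion ν S D := by
  have hM : (S.card * Θ ^ 4 : ℝ≥0∞) ≠ ⊤ := by finiteness
  refine (ENNReal.div_pos hc.ne' hM).trans_le (le_sInf ?_)
  rintro _ ⟨A, hA, hAD, hpos, hhalf, rfl⟩
  have hfin : nuT ν S D A ≠ ⊤ :=
    ((nuT_le hΘ1 hΘ hA hAD).trans_lt (ENNReal.mul_lt_top (by finiteness)
      ((measure_mono hAD).trans_lt hDfin.lt_top))).ne
  rw [ENNReal.le_div_iff_mul_le (Or.inl hpos.ne') (Or.inl hfin), div_eq_mul_inv, mul_right_comm,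
    ← div_eq_mul_inv]
  exact ENNReal.div_le_of_le_mul' (mul_nuT_le_mkBdry hΘ1 hΘ hmcp hS hSinv hΘtop hD hDfin hexp
    hA hAD hhalf)

end Markov

section Greedy

variable {S : Set Γ} {Y E P : Set X} {a g c : ℝ≥0∞} (hbig : IsExpandingAbove ν S Y g c)
  (hYE : ν (Y \ E) ≤ c / 2 * g) (hEY : E ⊆ Y)

include hbig hYE hEY

lemma measure_lt_of_measure_vertexBdry_le {R : Set X} (hR : MeasurableSet R) (hRE : R ⊆ E)
    (hRb : ν R ≤ ν Y / 2) (hbd : ν (vertexBdry S E R) ≤ c / 2 * ν R) : ν R < g := by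
  by_contra! hgR
  exact (hbig R (hRE.trans hEY) hR hgR hRb).not_ge
    (measure_smul_inter_le hbd (hYE.trans (by gcongr)))

lemma greedy_invariant (hg0 : 0 < g) (hga : g + a ≤ ν Y / 2) {R A : ℕ → Set X} (hR0 : R 0 = ∅)
    (hRs : ∀ i, R (i + 1) = R i ∪ A i)
    (hA : ∀ i, MeasurableSet (A i) ∧ A i ⊆ (E \ R i) \ P ∧ ν (A i) ≤ a ∧
      ν (vertexBdry S (E \ R i) (A i)) ≤ c / 2 * ν (A i)) (i : ℕ) :
    MeasurableSet (R i) ∧ R i ⊆ E \ P ∧ ν (vertexBdry S E (R i)) ≤ c / 2 * ν (R i) ∧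
      ν (R i) < g := by
  induction i with
  | zero => simpa [hR0, vertexBdry] using hg0
  | succ i ih =>
    obtain ⟨hRm, hRE, hRbd, hRg⟩ := ih
    obtain ⟨hAm, hAE, hAa, hAbd⟩ := hA i
    have hdisj : Disjoint (R i) (A i) :=
      Set.disjoint_right.2 fun x hx => (hAE hx).1.2
    have hmeas : ν (R (i + 1)) = ν (R i) + ν (A i) := by rw [hRs, measure_union hdisj hAm]
    have hm : MeasurableSet (R (i + 1)) := hRs i ▸ hRm.union hAm
    have hsub : R (i + 1) ⊆ E \ P := hRs i ▸ Set.union_subset hRE fun x hx =>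
      ⟨(hAE hx).1.1, (hAE hx).2⟩
    have hbd : ν (vertexBdry S E (R (i + 1))) ≤ c / 2 * ν (R (i + 1)) :=
      calc ν (vertexBdry S E (R (i + 1)))
          ≤ ν (vertexBdry S E (R i)) + ν (vertexBdry S (E \ R i) (A i)) := by
            rw [hRs]
            exact (measure_mono (vertexBdry_union_subset S E _ _)).trans (measure_union_le _ _)
        _ ≤ c / 2 * ν (R i) + c / 2 * ν (A i) := add_le_add hRbd hAbd
        _ = c / 2 * ν (R (i + 1)) := by rw [hmeas, mul_add]
    exact ⟨hm, hsub, hbd, measure_lt_of_measure_vertexBdry_le hbig hYE hEY hm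
      (hsub.trans Set.sdiff_subset) (hmeas ▸ (add_le_add hRg.le hAa).trans hga) hbd⟩

lemma exists_small_removal (hg0 : 0 < g) (hgtop : g ≠ ⊤) (hga : g + a ≤ ν Y / 2) (ha : a ≠ ⊤) :
    ∃ R, MeasurableSet R ∧ R ⊆ E \ P ∧ ν R ≤ g ∧ ∀ B ⊆ (E \ R) \ P, MeasurableSet B →
      ν B ≤ a → c / 4 * ν B ≤ ν (vertexBdry S (E \ R) B) := by
  obtain ⟨R, A, hR0, hRs, hA, hmax⟩ := exists_greedy_seq (ν := ν)
    (fun R A => MeasurableSet A ∧ A ⊆ (E \ R) \ P ∧ ν A ≤ a ∧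
      ν (vertexBdry S (E \ R) A) ≤ c / 2 * ν A)
    (fun R => by simp [vertexBdry]) ha fun R A h => h.2.2.1
  have hinv := greedy_invariant hbig hYE hEY hg0 hga hR0 hRs hA
  have hmono : Monotone R := monotone_nat_of_le_succ fun i => hRs i ▸ Set.subset_union_left
  set R' := ⋃ i, R i
  have hR'g : ν R' ≤ g := hmono.measure_iUnion ▸ iSup_le fun i => (hinv i).2.2.2.le
  have htail : Tendsto (fun i => ν (R' \ R i)) atTop (𝓝 0) :=
    tendsto_measure_iUnion_sdiff (fun i => (hinv i).1) hmono (ne_top_of_le_ne_top hgtop hR'g)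
  have hAtail : Tendsto (fun i => 2 * ν (A i)) atTop (𝓝 0) := by
    have hAR' : ∀ i, A i ⊆ R' \ R i := fun i x hx =>
      ⟨Set.mem_iUnion.2 ⟨i + 1, hRs i ▸ Or.inr hx⟩, ((hA i).2.1 hx).1.2⟩
    simpa using ENNReal.Tendsto.const_mul (tendsto_of_tendsto_of_tendsto_of_le_of_le
      tendsto_const_nhds htail (fun i => zero_le) fun i => measure_mono (hAR' i))
      (Or.inr ENNReal.ofNat_ne_top)
  refine ⟨R', .iUnion fun i => (hinv i).1, Set.iUnion_subset fun i => (hinv i).2.1, hR'g, ?_⟩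
  intro B hB hBm hBa
  by_contra! hlt
  have hpos : 0 < c / 4 * ν B := zero_le.trans_lt hlt
  -- A set expanding this badly in `E \ R'` would have been a candidate at every late stage.
  have hcand : ∀ᶠ i in atTop, ν B ≤ 2 * ν (A i) := by
    filter_upwards [htail.eventually (ge_mem_nhds hpos)] with i hi
    refine hmax i B ⟨hBm, fun x hx => ⟨⟨(hB hx).1.1, fun h => (hB hx).1.2
      (Set.mem_iUnion.2 ⟨i, h⟩)⟩, (hB hx).2⟩, hBa, ?_⟩
    calc ν (vertexBdry S (E \ R i) B)
        ≤ ν (vertexBdry S (E \ R') B) + ν ((E \ R i) \ (E \ R')) :=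
          (measure_mono (vertexBdry_subset_union_sdiff S _ _ B)).trans (measure_union_le _ _)
      _ ≤ c / 4 * ν B + c / 4 * ν B := by
          refine add_le_add hlt.le ((measure_mono fun x hx => ?_).trans hi)
          exact ⟨not_not.1 fun h => hx.2 ⟨hx.1.1, h⟩, hx.1.2⟩
      _ = c / 2 * ν B := by rw [← add_mul, quarter_add_quarter]
  have hB0 : ν B = 0 := le_antisymm (ge_of_tendsto hAtail hcand) zero_le
  simp [hB0] at hpos

end Greedy

lemma exists_isUniformlyExpanding_between {S : Set Γ} {Y E P : Set X} {g cg c₄ c : ℝ≥0∞}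
    (hE : MeasurableSet E) (hEY : E ⊆ Y) (hYfin : ν Y ≠ ⊤) (hP : MeasurableSet P) (hPE : P ⊆ E)
    (hc : 0 < c) (hPexp : IsUniformlyExpanding ν S P (ν Y / 2) c) (hg0 : 0 < g)
    (hg : g ≤ ν Y / 4) (hcg : 0 < cg)
    (hbig : IsExpandingAbove ν S Y g cg) (hc₄ : 0 < c₄) (hmed : IsExpandingAbove ν S Y (ν Y / 4) c₄)
    (hYE : ν (Y \ E) ≤ cg / 2 * g) (hYEg : ν (Y \ E) + g ≤ c₄ / 2 * (ν Y / 4)) :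
    ∃ D, MeasurableSet D ∧ P ⊆ D ∧ D ⊆ E ∧ ν (Y \ D) ≤ ν (Y \ E) + g ∧
      ∃ c' > 0, IsUniformlyExpanding ν S D (ν Y / 2) c' := by
  have hY4 : ν Y / 4 ≠ ⊤ := ENNReal.div_ne_top hYfin (by norm_num)
  obtain ⟨R, hR, hRE, hRg, hthin⟩ := exists_small_removal (P := P) hbig hYE hEY hg0
    (ne_top_of_le_ne_top hY4 hg) (by rw [← quarter_add_quarter]; gcongr) hY4
  have hYD : ν (Y \ (E \ R)) ≤ ν (Y \ E) + g := by
    refine (measure_mono fun x hx => ?_).trans ((measure_union_le _ _).trans (by gcongr))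
    by_cases hxE : x ∈ E
    · exact Or.inr (not_not.1 fun h => hx.2 ⟨hxE, h⟩)
    · exact Or.inl ⟨hx.1, hxE⟩
  set c' := min (min c (cg / 4)) (min (c₄ / 2) 1)
  have hc' : 0 < c' := lt_min (lt_min hc (by simpa using hcg.ne')) (lt_min
    (by simpa using hc₄.ne') one_pos)
  refine ⟨E \ R, hE.diff hR, fun x hx => ⟨hPE hx, fun h => (hRE h).2 hx⟩, Set.sdiff_subset,
    hYD, c' * c' / 3, ENNReal.div_pos (mul_pos hc'.ne' hc'.ne').ne' (by norm_num), ?_⟩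
  refine isUniformlyExpanding_of_split (a := ν Y / 4) (fun x hx => ⟨hPE hx, fun h => (hRE h).2 hx⟩)
    hP (min_le_right _ _ |>.trans (min_le_right _ _))
    (hPexp.mono subset_rfl le_rfl (min_le_left _ _ |>.trans (min_le_left _ _)))
    (fun B hB hBm hBa => ?_) fun B hB hBm hBa hBb => ?_
  · exact (mul_le_mul_left (min_le_left _ _ |>.trans (min_le_right _ _)) _).trans
      (hthin B hB hBm hBa)
  · refine (mul_le_mul_left (min_le_right _ _ |>.trans (min_le_left _ _)) _).trans
      (half_mul_le_measure_vertexBdry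
        (hmed B (hB.trans (Set.sdiff_subset.trans hEY)) hBm hBa.le hBb)
        (hYD.trans (hYEg.trans ?_)))
    gcongr

def rnBoundedSet (ν : Measure X) (S : Finset Γ) (T : ℕ) : Set X :=
  {x | ∀ s ∈ S, (T : ℝ≥0∞)⁻¹ ≤ rnd ν s x ∧ rnd ν s x ≤ T}

lemma rnBoundedSet_mono (S : Finset Γ) : Monotone (rnBoundedSet (X := X) ν S) :=
  fun T T' h x hx s hs => ⟨le_trans (ENNReal.inv_le_inv.2 (by exact_mod_cast h)) (hx s hs).1,
    (hx s hs).2.trans (by exact_mod_cast h)⟩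

lemma measurableSet_rnBoundedSet (S : Finset Γ) (T : ℕ) :
    MeasurableSet (rnBoundedSet ν S T) := by
  simp only [rnBoundedSet, Set.ofPred_forall]
  exact .biInter S.countable_toSet fun s _ =>
    (measurableSet_le measurable_const (measurable_rnd s)).inter
      (measurableSet_le (measurable_rnd s) measurable_const)

section Filtration

variable [MeasurableConstSMul Γ X] [SigmaFinite ν]
  (hmcp : ∀ γ : Γ, Measure.QuasiMeasurePreserving (fun x : X => γ • x) ν ν)

include hmcp

lemma tendsto_measure_sdiff_rnBoundedSet {Y : Set X} (hY : MeasurableSet Y) (hYfin : ν Y ≠ ⊤)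
    (S : Finset Γ) : Tendsto (fun T => ν (Y \ rnBoundedSet ν S T)) atTop (𝓝 0) := by
  have hnull : ν (⋂ T, Y \ rnBoundedSet ν S T) = 0 := by
    rw [measure_eq_zero_iff_ae_notMem]
    filter_upwards [S.eventually_all.2 fun s _ => ae_rnd_pos_lt_top hmcp s] with x hx hmem
    obtain ⟨T, hT⟩ := (S.eventually_all.2 fun s hs =>
      eventually_inv_le_and_le (hx s hs).1 (hx s hs).2).exists
    exact (Set.mem_iInter.1 hmem T).2 hT
  simpa [hnull, Function.comp_def] using tendsto_measure_iInter_atTop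
    (fun T => (hY.diff (measurableSet_rnBoundedSet S T)).nullMeasurableSet)
    (fun T T' h => Set.sdiff_subset_sdiff_right (rnBoundedSet_mono (ν := ν) S h))
    ⟨0, ne_top_of_le_ne_top hYfin (measure_mono Set.sdiff_subset)⟩

lemma exists_rnBounded_filtration {Y : Set X} (hY : MeasurableSet Y) (hYfin : ν Y ≠ ⊤)
    (F : ℕ → Finset Γ) :
    ∃ (T : ℕ → ℕ) (E : ℕ → Set X), Monotone E ∧ (∀ m, MeasurableSet (E m)) ∧
      (∀ m, E m ⊆ Y) ∧ Tendsto (fun m => ν (Y \ E m)) atTop (𝓝 0) ∧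
      ∀ m, 1 ≤ T m ∧ E m ⊆ rnBoundedSet ν (F m) (T m) := by
  have hT : ∀ m, ∃ T : ℕ, 1 ≤ T ∧ ν (Y \ rnBoundedSet ν (F m) T) ≤ 2⁻¹ ^ m := fun m =>
    ((eventually_ge_atTop 1).and ((tendsto_measure_sdiff_rnBoundedSet hmcp hY hYfin
      (F m)).eventually (ge_mem_nhds (ENNReal.pow_pos (by simp) m)))).exists
  choose T hT1 hTY using hT
  set G : ℕ → Set X := fun i => rnBoundedSet ν (F i) (T i)
  -- Points of `E m` satisfy the bounds of every later stage, which makes `E` increasing.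
  refine ⟨T, fun m => Y ∩ ⋂ i, G (i + m), monotone_nat_of_le_succ fun m x hx => ?_,
    fun m => hY.inter (.iInter fun i => measurableSet_rnBoundedSet _ _),
    fun m => Set.inter_subset_left, ?_, fun m => ⟨hT1 m, fun x hx => ?_⟩⟩
  · refine ⟨hx.1, Set.mem_iInter.2 fun i => ?_⟩
    simpa [add_assoc, add_comm 1] using Set.mem_iInter.1 hx.2 (i + 1)
  · have hsum : ∑' i, (2⁻¹ : ℝ≥0∞) ^ i ≠ ⊤ := by simp [ENNReal.tsum_geometric]
    refine tendsto_of_tendsto_of_tendsto_of_le_of_le tendsto_const_nhds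
      (ENNReal.tendsto_sum_nat_add _ hsum) (fun m => zero_le) fun m => ?_
    calc ν (Y \ (Y ∩ ⋂ i, G (i + m))) = ν (⋃ i, Y \ G (i + m)) := by
          rw [Set.sdiff_self_inter, Set.sdiff_iInter]
      _ ≤ ∑' i, ν (Y \ G (i + m)) := measure_iUnion_le _
      _ ≤ ∑' i, 2⁻¹ ^ (i + m) := ENNReal.tsum_le_tsum fun i => hTY _
  · simpa using Set.mem_iInter.1 hx.2 0

end Filtration

def IsExpandingStage (ν : Measure X) (B : ℕ → Finset Γ) (E : ℕ → Set X) (Y : Set X)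
    (q : ℕ × Set X) : Prop :=
  MeasurableSet q.2 ∧ q.2 ⊆ E q.1 ∧ ∃ c > 0, IsUniformlyExpanding ν (B q.1 : Set Γ) q.2 (ν Y / 2) c

lemma isExpandingStage_empty (B : ℕ → Finset Γ) (E : ℕ → Set X) (Y : Set X) (K : ℕ) :
    IsExpandingStage ν B E Y (K, ∅) :=
  ⟨.empty, Set.empty_subset _, 1, one_pos, fun A hA _ _ => by simp [Set.subset_empty_iff.1 hA]⟩

lemma IsExpandingStage.exists_extension {B : ℕ → Finset Γ} (hBmono : Monotone B) {Y : Set X}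
    {E : ℕ → Set X} (hEmono : Monotone E) (hEmeas : ∀ m, MeasurableSet (E m))
    (hEY : ∀ m, E m ⊆ Y) (hElim : Tendsto (fun m => ν (Y \ E m)) atTop (𝓝 0))
    (hY0 : ν Y ≠ 0) (hYfin : ν Y ≠ ⊤)
    (hexp : ∀ t, 0 < t → t ≠ ⊤ → ∃ c > 0, ∃ k, ∀ K ≥ k, IsExpandingAbove ν (B K : Set Γ) Y t c)
    {q : ℕ × Set X} (hq : IsExpandingStage ν B E Y q) {ε : ℝ≥0∞} (hε : 0 < ε) :
    ∃ q', IsExpandingStage ν B E Y q' ∧ q.2 ⊆ q'.2 ∧ ν (Y \ q'.2) ≤ ε := by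
  obtain ⟨hD, hDE, c, hc, hDexp⟩ := hq
  have hY4 : 0 < ν Y / 4 := ENNReal.div_pos hY0 (by norm_num)
  obtain ⟨c₄, hc₄, k₄, h₄⟩ := hexp (ν Y / 4) hY4 (ENNReal.div_ne_top hYfin (by norm_num))
  -- `η` bounds both the loss `Y \ E m` and the removed mass `g`, so that `ν (Y \ D') ≤ 2 η`.
  set η := min ε (c₄ / 2 * (ν Y / 4)) / 2
  have hη : 0 < η := ENNReal.half_pos (lt_min hε (ENNReal.mul_pos
    (by simpa using hc₄.ne') hY4.ne')).ne'
  set g := min η (ν Y / 4)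
  have hg0 : 0 < g := lt_min hη hY4
  obtain ⟨cg, hcg, kg, hgexp⟩ := hexp g hg0
    (ne_top_of_le_ne_top (ENNReal.div_ne_top hYfin (by norm_num)) (min_le_right _ _))
  obtain ⟨m, hqm, h4m, hgm, hYE⟩ := ((eventually_ge_atTop q.1).and ((eventually_ge_atTop k₄).and
    ((eventually_ge_atTop kg).and (hElim.eventually (ge_mem_nhds (lt_min
      (ENNReal.mul_pos (ENNReal.half_pos hcg.ne').ne' hg0.ne' : 0 < cg / 2 * g) hη)))))).exists
  have hloss : ν (Y \ E m) + g ≤ min ε (c₄ / 2 * (ν Y / 4)) :=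
    (add_le_add (hYE.trans (min_le_right _ _)) (min_le_left _ _)).trans
      (ENNReal.add_halves _).le
  obtain ⟨D', hD', hDD', hD'E, hYD', c', hc', hD'exp⟩ := exists_isUniformlyExpanding_between
    (hEmeas m) (hEY m) hYfin hD (hDE.trans (hEmono hqm)) hc
    (hDexp.mono (Finset.coe_subset.2 (hBmono hqm)) le_rfl le_rfl) hg0 (min_le_right _ _) hcg
    (hgexp m hgm) hc₄ (h₄ m h4m) (hYE.trans (min_le_left _ _)) (hloss.trans (min_le_right _ _))
  exact ⟨(m, D'), ⟨hD', hD'E, c', hc', hD'exp⟩, hDD', hYD'.trans (hloss.trans (min_le_left _ _))⟩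

end DomainExpansion

open DomainExpansion

theorem DomainAsymptoticExpansion.exists_expansion {Γ X : Type*} [Group Γ] [MulAction Γ X]
    [MeasurableSpace X] {ℓ : Γ → ℕ} {ν : Measure X} {Y : Set X}
    (h : DomainAsymptoticExpansion ℓ ν Y) {B : ℕ → Finset Γ}
    (hB : ∀ K, (B K : Set Γ) = {γ | ℓ γ ≤ K}) (hY0 : ν Y ≠ 0) (hYfin : ν Y ≠ ⊤) {t : ℝ≥0∞}
    (ht0 : 0 < t) (ht : t ≠ ⊤) :
    ∃ c > 0, ∃ k, ∀ K ≥ k, IsExpandingAbove ν (B K : Set Γ) Y t c := by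
  obtain ⟨c, k, hc, hexp⟩ := h
  set α := min (1 / 2 : ℝ) (t / ν Y).toReal
  have hα : α ∈ Set.Ioc (0 : ℝ) (1 / 2) := ⟨lt_min (by norm_num) (ENNReal.toReal_pos
    (ENNReal.div_pos ht0.ne' hYfin).ne' (ENNReal.div_ne_top ht hY0)), min_le_left _ _⟩
  have hαt : ENNReal.ofReal α * ν Y ≤ t :=
    calc ENNReal.ofReal α * ν Y ≤ ENNReal.ofReal (t / ν Y).toReal * ν Y := by
          gcongr; exact min_le_right _ _
      _ = t := by rw [ENNReal.ofReal_toReal (ENNReal.div_ne_top ht hY0),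
          ENNReal.div_mul_cancel hY0 hYfin]
  refine ⟨ENNReal.ofReal (c α), ENNReal.ofReal_pos.2 (hc α hα), k α,
    fun K hK A hAY hA htA hAY2 => ?_⟩
  refine (hexp α hα A hA hAY (hαt.trans htA) hAY2).trans_le
    (measure_mono (Set.inter_subset_inter_left _ ?_))
  rw [hB, ← Set.iUnion_smul_set]
  exact Set.biUnion_mono (fun γ hγ => le_trans hγ hK) fun γ _ => Set.image_smul.subset

theorem exhaustion_by_markov_domains_general {Γ X : Type*} [Group Γ]
    [MulAction Γ X] [MeasurableSpace X]
    (ℓ : Γ → ℕ) (hl0 : ∀ γ : Γ, ℓ γ = 0 ↔ γ = 1) (hlinv : ∀ γ : Γ, ℓ γ⁻¹ = ℓ γ)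
    (hlprop : ∀ k : ℕ, {γ : Γ | ℓ γ ≤ k}.Finite)
    (ν : Measure X) [SigmaFinite ν]
    (hmeas : ∀ γ : Γ, Measurable (fun x : X => γ • x))
    (hmcp : ∀ γ : Γ, Measure.QuasiMeasurePreserving (fun x : X => γ • x) ν ν)
    (Y : Set X) (hY : MeasurableSet Y) (hYpos : 0 < ν Y) (hYfin : ν Y < ⊤)
    (hasym : DomainAsymptoticExpansion ℓ ν Y) :
    ∃ (Yn : ℕ → Set X) (Sn : ℕ → Finset Γ) (Θ : ℕ → ℝ),
      Monotone Yn ∧ (∀ n, Yn n ⊆ Y) ∧ ν (Y \ ⋃ n, Yn n) = 0 ∧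
      (∀ n, MeasurableSet (Yn n) ∧ 0 < ν (Yn n) ∧ ν (Yn n) < ⊤) ∧
      (∀ n, (∀ s ∈ Sn n, s⁻¹ ∈ Sn n) ∧ (1 : Γ) ∈ Sn n) ∧
      (∀ n, MarkovSExpansion ν (Sn n) (Yn n)) ∧
      (∀ n, 1 ≤ Θ n ∧ ∀ y ∈ Yn n, ∀ s ∈ Sn n, s • y ∈ Yn n →
        ENNReal.ofReal (1 / Θ n) ≤ rnd ν s y ∧ rnd ν s y ≤ ENNReal.ofReal (Θ n)) := by
  have : MeasurableConstSMul Γ X := ⟨hmeas⟩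
  obtain ⟨B, hBmono, hB, hBsymm⟩ := exists_finset_balls ℓ hl0 hlinv hlprop
  obtain ⟨T, E, hEmono, hEmeas, hEY, hElim, hT⟩ := exists_rnBounded_filtration hmcp hY hYfin.ne B
  obtain ⟨f, hf, hmono, hpos, hnull⟩ := exists_exhausting_seq (IsExpandingStage ν B E Y) Prod.snd
    hYpos.ne' hYfin.ne (isExpandingStage_empty B E Y 0) fun q hq ε hε =>
      hq.exists_extension hBmono hEmono hEmeas hEY hElim hYpos.ne' hYfin.ne
        (fun t ht0 ht => hasym.exists_expansion hB hYpos.ne' hYfin.ne ht0 ht) hε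
  have hYn (n : ℕ) : (f n).2 ⊆ Y := (hf n).2.1.trans (hEY _)
  have hrn (n : ℕ) : ∀ x ∈ (f n).2, ∀ s ∈ B (f n).1, s • x ∈ (f n).2 →
      ((T (f n).1 : ℝ≥0∞))⁻¹ ≤ rnd ν s x ∧ rnd ν s x ≤ T (f n).1 :=
    fun x hx s hs _ => (hT _).2 ((hf n).2.1 hx) s hs
  refine ⟨fun n => (f n).2, fun n => B (f n).1, fun n => T (f n).1, hmono, hYn, hnull,
    fun n => ⟨(hf n).1, hpos n, (measure_mono (hYn n)).trans_lt hYfin⟩,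
    fun n => ⟨(hBsymm _).2, (hBsymm _).1⟩, fun n => ?_, fun n => ⟨Nat.one_le_cast.2 (hT _).1, ?_⟩⟩
  · obtain ⟨hD, -, c, hc, hexp⟩ := hf n
    exact markovSExpansion_of_isUniformlyExpanding (by exact_mod_cast (hT _).1) (hrn n) hmcp
      (hBsymm _).1 (hBsymm _).2 (ENNReal.natCast_ne_top _) hD
      ((measure_mono (hYn n)).trans_lt hYfin).ne hc
      (hexp.mono subset_rfl (by gcongr; exact hYn n) le_rfl)
  · intro y hy s hs hsy
    rw [one_div, ENNReal.ofReal_inv_of_pos (Nat.cast_pos.2 (hT _).1), ENNReal.ofReal_natCast]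
    exact hrn n y hy s hs hsy

/-- **Proposition 3.23, first part.** If `Y` is a domain of asymptotic
expansion for a measure-class-preserving action, then `Y` admits an exhaustion by
domains `Y_n` of Markov `S⁽ⁿ⁾`-expansion, with Radon–Nikodym derivatives bounded
between `1/Θ_n` and `Θ_n` on the relevant part of each `Y_n`. -/
theorem exhaustion_by_markov_domains {Γ X : Type*} [Group Γ] [Countable Γ]
    [MulAction Γ X] [MeasurableSpace X]
    (ℓ : Γ → ℕ) (hl0 : ∀ γ : Γ, ℓ γ = 0 ↔ γ = 1) (hlinv : ∀ γ : Γ, ℓ γ⁻¹ = ℓ γ)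
    (hlsub : ∀ γ₁ γ₂ : Γ, ℓ (γ₁ * γ₂) ≤ ℓ γ₁ + ℓ γ₂)
    (hlprop : ∀ k : ℕ, {γ : Γ | ℓ γ ≤ k}.Finite)
    (ν : Measure X) [SigmaFinite ν]
    (hmeas : ∀ γ : Γ, Measurable (fun x : X => γ • x))
    (hmcp : ∀ γ : Γ, Measure.QuasiMeasurePreserving (fun x : X => γ • x) ν ν)
    (Y : Set X) (hY : MeasurableSet Y) (hYpos : 0 < ν Y) (hYfin : ν Y < ⊤)
    (hasym : DomainAsymptoticExpansion ℓ ν Y) :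
    ∃ (Yn : ℕ → Set X) (Sn : ℕ → Finset Γ) (Θ : ℕ → ℝ),
      Monotone Yn ∧ (∀ n, Yn n ⊆ Y) ∧ ν (Y \ ⋃ n, Yn n) = 0 ∧
      (∀ n, MeasurableSet (Yn n) ∧ 0 < ν (Yn n) ∧ ν (Yn n) < ⊤) ∧
      (∀ n, (∀ s ∈ Sn n, s⁻¹ ∈ Sn n) ∧ (1 : Γ) ∈ Sn n) ∧
      (∀ n, MarkovSExpansion ν (Sn n) (Yn n)) ∧
      (∀ n, 1 ≤ Θ n ∧ ∀ y ∈ Yn n, ∀ s ∈ Sn n, s • y ∈ Yn n →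
        ENNReal.ofReal (1 / Θ n) ≤ rnd ν s y ∧ rnd ν s y ≤ ENNReal.ofReal (Θ n)) :=
  exhaustion_by_markov_domains_general ℓ hl0 hlinv hlprop ν hmeas hmcp Y hY hYpos hYfin hasym
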